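/- Let K be a field of characteristic 0 and Q_1,…,Q_v nonconstant polynomials in K[X] such that gcd(Q_i(X+k), Q_j(X)) = 1 for all i ≠ j and all k ∈ ℤ. Then the subspaces K_{Q_1}(X),…,K_{Q_v}(X) of K(X) are in direct sum: if u_i ∈ K_{Q_i}(X) for each i and u_1 + … + u_v = 0, then u_1 = … = u_v = 0. -/

import Mathlib

open Polynomial

/-- For a nonconstant polynomial `Q ∈ K[X]`, `KQspan K Q` is the `K`-linear span in `K(X)`
of the fractions `X^ℓ / Q(X+h)^j` with `h ∈ ℤ`, `j ≥ 1` and `0 ≤ ℓ < j·deg Q`. -/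
noncomputable def KQspan (K : Type*) [Field K] (Q : Polynomial K) :
    Submodule K (RatFunc K) :=
  Submodule.span K { f : RatFunc K | ∃ (h : ℤ) (j ℓ : ℕ), 1 ≤ j ∧ ℓ < j * Q.natDegree ∧
    f = algebraMap (Polynomial K) (RatFunc K) (X ^ ℓ) /
        algebraMap (Polynomial K) (RatFunc K) ((Q.comp (X + C (h : K))) ^ j) }

section Aux

variable {K : Type*} [Field K]

/-- The multiplicative monoid generated by the integer shifts of `Q`. -/
noncomputable def shiftMonoid (Q : K[X]) : Submonoid K[X] :=
  Submonoid.closure { p : K[X] | ∃ h : ℤ, p = Q.comp (X + C (h : K)) }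

lemma shift_ne_zero {Q : K[X]} (hQ : 0 < Q.natDegree) (c : K) :
    Q.comp (X + C c) ≠ 0 := by
  intro h
  have : (Q.comp (X + C c)).natDegree = Q.natDegree := by
    rw [natDegree_comp, natDegree_X_add_C, mul_one]
  rw [h, natDegree_zero] at this
  omega

lemma shiftMonoid_ne_zero {Q : K[X]} (hQ : 0 < Q.natDegree) {d : K[X]}
    (hd : d ∈ shiftMonoid Q) : d ≠ 0 := by
  induction hd using Submonoid.closure_induction with
  | mem x hx => obtain ⟨h, rfl⟩ := hx; exact shift_ne_zero hQ _
  | one => exact one_ne_zero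
  | mul x y _ _ hx hy => exact mul_ne_zero hx hy

lemma coprime_shiftMonoid {Q₁ Q₂ : K[X]}
    (h : ∀ h₁ h₂ : ℤ, IsCoprime (Q₁.comp (X + C (h₁ : K))) (Q₂.comp (X + C (h₂ : K))))
    {a b : K[X]} (ha : a ∈ shiftMonoid Q₁) (hb : b ∈ shiftMonoid Q₂) :
    IsCoprime a b := by
  induction ha using Submonoid.closure_induction with
  | one => exact isCoprime_one_left
  | mul x y _ _ hx hy => exact hx.mul_left hy
  | mem x hx =>
    obtain ⟨h₁, rfl⟩ := hx
    induction hb using Submonoid.closure_induction with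
    | one => exact isCoprime_one_right
    | mul x y _ _ hx hy => exact hx.mul_right hy
    | mem y hy => obtain ⟨h₂, rfl⟩ := hy; exact h h₁ h₂

/-- The submodule of proper fractions with denominator in `shiftMonoid Q`. -/
noncomputable def properFrac (K : Type*) [Field K] (Q : K[X]) (hQ : 0 < Q.natDegree) :
    Submodule K (RatFunc K) where
  carrier := { f | ∃ p d : K[X], d ∈ shiftMonoid Q ∧ p.degree < d.degree ∧
    f = algebraMap K[X] (RatFunc K) p / algebraMap K[X] (RatFunc K) d }
  zero_mem' := ⟨0, 1, one_mem _, by simp [degree_one], by simp⟩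
  add_mem' := by
    rintro f g ⟨p₁, d₁, hd₁, hdeg₁, rfl⟩ ⟨p₂, d₂, hd₂, hdeg₂, rfl⟩
    refine ⟨p₁ * d₂ + p₂ * d₁, d₁ * d₂, mul_mem hd₁ hd₂, ?_, ?_⟩
    · have h1 : (p₁ * d₂).degree < (d₁ * d₂).degree := by
        rw [degree_mul, degree_mul]
        exact WithBot.add_lt_add_right
          ((d₂.degree_eq_natDegree (shiftMonoid_ne_zero hQ hd₂)) ▸ WithBot.coe_ne_bot) hdeg₁
      have h2 : (p₂ * d₁).degree < (d₁ * d₂).degree := by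
        rw [degree_mul, degree_mul, add_comm d₁.degree]
        exact WithBot.add_lt_add_right
          ((d₁.degree_eq_natDegree (shiftMonoid_ne_zero hQ hd₁)) ▸ WithBot.coe_ne_bot) hdeg₂
      exact lt_of_le_of_lt (degree_add_le _ _) (max_lt h1 h2)
    · have hd₁0 : (algebraMap K[X] (RatFunc K)) d₁ ≠ 0 := by
        simpa using shiftMonoid_ne_zero hQ hd₁
      have hd₂0 : (algebraMap K[X] (RatFunc K)) d₂ ≠ 0 := by
        simpa using shiftMonoid_ne_zero hQ hd₂
      field_simp
      simp only [map_mul, map_add]; ring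
  smul_mem' := by
    rintro c f ⟨p, d, hd, hdeg, rfl⟩
    refine ⟨c • p, d, hd, lt_of_le_of_lt (degree_smul_le _ _) hdeg, ?_⟩
    have : (algebraMap K[X] (RatFunc K)) (c • p) = c • (algebraMap K[X] (RatFunc K)) p := by
      rw [Algebra.smul_def, map_mul, ← IsScalarTower.algebraMap_apply, ← Algebra.smul_def]
    rw [this, smul_div_assoc]

lemma KQspan_le_properFrac (Q : K[X]) (hQ : 0 < Q.natDegree) :
    KQspan K Q ≤ properFrac K Q hQ := by
  rw [KQspan, Submodule.span_le]
  rintro f ⟨h, j, ℓ, hj, hℓ, rfl⟩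
  have hmem : Q.comp (X + C ((h : ℤ) : K)) ∈ shiftMonoid Q :=
    Submonoid.subset_closure ⟨h, rfl⟩
  refine ⟨X ^ ℓ, (Q.comp (X + C (h : K))) ^ j, pow_mem hmem j, ?_, rfl⟩
  have hne := shift_ne_zero hQ ((h : ℤ) : K)
  have hdne : (Q.comp (X + C ((h : ℤ) : K))) ^ j ≠ 0 := pow_ne_zero _ hne
  rw [degree_X_pow, degree_eq_natDegree hdne, natDegree_pow, natDegree_comp,
    natDegree_X_add_C, mul_one]
  exact_mod_cast hℓ

end Aux

/-- If `Q₁,…,Q_v` are nonconstant polynomials with `gcd(Q_i(X+k), Q_j(X)) = 1` for all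
`i ≠ j` and all `k ∈ ℤ`, then the subspaces `K_{Q_i}(X)` are in direct sum. -/
theorem KQ_direct_sum (K : Type*) [Field K] [CharZero K] (v : ℕ)
    (Q : Fin v → Polynomial K) (hdeg : ∀ i, 0 < (Q i).natDegree)
    (hcop : ∀ i j : Fin v, i ≠ j → ∀ k : ℤ,
      IsCoprime ((Q i).comp (X + C (k : K))) (Q j))
    (u : Fin v → RatFunc K) (hu : ∀ i, u i ∈ KQspan K (Q i))
    (hsum : ∑ i, u i = 0) :
    ∀ i, u i = 0 := by
  -- coprimality of shifts for i ≠ j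
  have hshift : ∀ i j : Fin v, i ≠ j → ∀ h₁ h₂ : ℤ,
      IsCoprime ((Q i).comp (X + C (h₁ : K))) ((Q j).comp (X + C (h₂ : K))) := by
    intro i j hij h₁ h₂
    have := (hcop i j hij (h₁ - h₂)).map (aeval (X + C (h₂ : K)) : K[X] →ₐ[K] K[X]).toRingHom
    simpa [← comp_eq_aeval, comp_assoc, add_assoc, ← C_add, sub_add_cancel] using this
  -- represent each u i as a proper fraction
  have hrep : ∀ i, ∃ p d : K[X], d ∈ shiftMonoid (Q i) ∧ p.degree < d.degree ∧
      u i = algebraMap K[X] (RatFunc K) p / algebraMap K[X] (RatFunc K) d :=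
    fun i => KQspan_le_properFrac (Q i) (hdeg i) (hu i)
  choose p d hd hpd hupd using hrep
  have hd0 : ∀ i, d i ≠ 0 := fun i => shiftMonoid_ne_zero (hdeg i) (hd i)
  have hd0' : ∀ i, algebraMap K[X] (RatFunc K) (d i) ≠ 0 := by
    intro i; simpa using hd0 i
  -- clear denominators
  have hpoly : ∑ i, p i * ∏ j ∈ Finset.univ.erase i, d j = 0 := by
    apply RatFunc.algebraMap_injective K
    rw [map_zero, map_sum]
    have key : ∀ i : Fin v, algebraMap K[X] (RatFunc K) (p i * ∏ j ∈ Finset.univ.erase i, d j)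
        = u i * algebraMap K[X] (RatFunc K) (∏ j, d j) := by
      intro i
      rw [hupd i, map_mul, ← Finset.mul_prod_erase _ d (Finset.mem_univ i), map_mul,
        div_mul_eq_mul_div, mul_left_comm, mul_div_cancel_left₀ _ (hd0' i)]
    simp_rw [key, ← Finset.sum_mul, hsum, zero_mul]
  intro i
  -- d i divides p i * ∏_{j ≠ i} d j
  have hdvd : d i ∣ p i * ∏ j ∈ Finset.univ.erase i, d j := by
    rw [← Finset.add_sum_erase _ _ (Finset.mem_univ i)] at hpoly
    rw [eq_neg_of_add_eq_zero_left hpoly]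
    rw [dvd_neg]
    apply Finset.dvd_sum
    intro j hj
    exact (Finset.dvd_prod_of_mem _ (Finset.mem_erase.mpr
      ⟨(Finset.mem_erase.mp hj).1.symm, Finset.mem_univ i⟩)).mul_left _
  have hcopr : IsCoprime (d i) (∏ j ∈ Finset.univ.erase i, d j) := by
    apply IsCoprime.prod_right
    intro j hj
    exact coprime_shiftMonoid (hshift i j ((Finset.mem_erase.mp hj).1.symm)) (hd i) (hd j)
  have hdp : d i ∣ p i := (hcopr.dvd_of_dvd_mul_right hdvd)
  have hp0 : p i = 0 := by
    by_contra hp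
    exact absurd (degree_le_of_dvd hdp hp) (not_le.mpr (hpd i))
  rw [hupd i, hp0, map_zero, zero_div]
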